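/- arXiv:1107.2748 — 9 statements merged into one kernel-verified Lean document; each statement's English description precedes it below -/
import Mathlib

section
/- Let d ≥ 1, let Q be an invertible real d×d matrix, let M satisfy the commutation condition Mᵀ(QᵀQ)⁻¹ = (QᵀQ)⁻¹M, and let v, w be symmetric real d×d matrices. Let R be a symmetric d×d matrix with R·R = v̄, and suppose that R·cosh(Rt) + w̄·sinh(Rt) is invertible for every t ∈ [0,T]. Define ψ(t) := (QᵀQ)⁻¹M/2 − Q⁻¹·R·k(t)·(Qᵀ)⁻¹/2. Then ψ(0) = w and, for every t ∈ [0,T], ψ is differentiable at t with ψ′(t) = ψ(t)M + Mᵀψ(t) − 2ψ(t)QᵀQψ(t) + v. -/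
/-! With `A t = R cosh(tR) + w̄ sinh(tR)` and `B t = R sinh(tR) + w̄ cosh(tR)` one has `A' = B R` and
`B' = A R`, so `k = -A⁻¹ B` solves the Riccati equation `k' = k R k - R` (the classical
linearisation of a matrix Riccati equation). Then `X = Q⁻¹ R k Qᵀ⁻¹` solves
`X' = X (QᵀQ) X - Q⁻¹ v̄ Qᵀ⁻¹`, and the commutation condition says exactly that `u = (QᵀQ)⁻¹ M`
satisfies `u (QᵀQ) = Mᵀ`; together with `(QᵀQ) u = M` this turns the equation for `X` into the
Riccati equation for `ψ = (u - X) / 2`. At `t = 0`, `A = R` and `k = -R⁻¹ w̄` give `ψ 0 = w`. -/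

open Matrix NormedSpace

attribute [local instance] Matrix.linftyOpNormedRing Matrix.linftyOpNormedAlgebra

/-- `cosh` of a square matrix. -/
noncomputable def mcosh {d : ℕ} (X : Matrix (Fin d) (Fin d) ℝ) : Matrix (Fin d) (Fin d) ℝ :=
  (2:ℝ)⁻¹ • (exp X + exp (-X))

/-- `sinh` of a square matrix. -/
noncomputable def msinh {d : ℕ} (X : Matrix (Fin d) (Fin d) ℝ) : Matrix (Fin d) (Fin d) ℝ :=
  (2:ℝ)⁻¹ • (exp X - exp (-X))

section Riccati

variable {𝔸 : Type*} [NormedRing 𝔸] [NormedAlgebra ℝ 𝔸] {t : ℝ}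

theorem HasDerivAt.ringInverse [HasSummableGeomSeries 𝔸] {A : ℝ → 𝔸} {A' : 𝔸}
    (hA : HasDerivAt A A' t) (hu : IsUnit (A t)) :
    HasDerivAt (fun s => Ring.inverse (A s))
      (-(Ring.inverse (A t) * A' * Ring.inverse (A t))) t := by
  obtain ⟨u, hu⟩ := hu
  have hinv := hasFDerivAt_ringInverse (𝕜 := ℝ) u
  rw [← Ring.inverse_unit, hu] at hinv
  simpa [Function.comp_def, mul_assoc] using hinv.comp_hasDerivAt t hA

theorem hasDerivAt_neg_ringInverse_mul [HasSummableGeomSeries 𝔸] {A B : ℝ → 𝔸} {R : 𝔸}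
    (hA : HasDerivAt A (B t * R) t) (hB : HasDerivAt B (A t * R) t) (hu : IsUnit (A t)) :
    HasDerivAt (fun s => -(Ring.inverse (A s) * B s))
      (-(Ring.inverse (A t) * B t) * R * -(Ring.inverse (A t) * B t) - R) t := by
  refine ((hA.ringInverse hu).mul hB).neg.congr_deriv ?_
  have hinv : Ring.inverse (A t) * (A t * R) = R := by
    rw [← mul_assoc, Ring.inverse_mul_cancel _ hu, one_mul]
  rw [hinv]
  noncomm_ring

theorem HasDerivAt.conj_mul_riccati {k : ℝ → 𝔸} {R S S' P : 𝔸}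
    (hk : HasDerivAt k (k t * R * k t - R) t) (hSP : S' * P * S = 1) :
    HasDerivAt (fun s => S * R * k s * S')
      (S * R * k t * S' * P * (S * R * k t * S') - S * (R * R) * S') t := by
  refine ((hk.const_mul (S * R)).mul_const S').congr_deriv ?_
  rw [show S * R * k t * S' * P * (S * R * k t * S') = S * R * k t * (S' * P * S) * R * k t * S' by
    noncomm_ring, hSP]
  noncomm_ring

theorem hasDerivAt_riccati_of_shift {X ψ : ℝ → 𝔸} {u P M Mt V : 𝔸}
    (hX : HasDerivAt X (X t * P * X t - ((2:ℝ) • V + Mt * u)) t)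
    (huP : u * P = Mt) (hPu : P * u = M) (hψ : ∀ s, ψ s = (2:ℝ)⁻¹ • u - (2:ℝ)⁻¹ • X s) :
    HasDerivAt ψ (ψ t * M + Mt * ψ t - (2:ℝ) • (ψ t * P * ψ t) + V) t := by
  subst huP hPu
  rw [funext hψ]
  refine ((hX.const_smul (2:ℝ)⁻¹).const_sub ((2:ℝ)⁻¹ • u)).congr_deriv ?_
  simp only [smul_mul_assoc, mul_smul_comm, sub_mul, mul_sub, smul_sub, smul_smul, mul_assoc]
  module

end Riccati

section Hyperbolic

variable {d : ℕ}

theorem mcosh_zero : mcosh (0 : Matrix (Fin d) (Fin d) ℝ) = 1 := by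
  rw [mcosh, neg_zero, exp_zero, ← two_smul ℝ (1 : Matrix (Fin d) (Fin d) ℝ), smul_smul]
  norm_num

theorem msinh_zero : msinh (0 : Matrix (Fin d) (Fin d) ℝ) = 0 := by
  rw [msinh, neg_zero, exp_zero, sub_self, smul_zero]

theorem hasDerivAt_exp_neg_smul (R : Matrix (Fin d) (Fin d) ℝ) (t : ℝ) :
    HasDerivAt (fun s : ℝ => exp (-(s • R))) (exp (-(t • R)) * -R) t := by
  have h := hasDerivAt_exp_smul_const (-R) t
  simp only [smul_neg] at h
  exact h

theorem hasDerivAt_mcosh_smul (R : Matrix (Fin d) (Fin d) ℝ) (t : ℝ) :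
    HasDerivAt (fun s : ℝ => mcosh (s • R)) (msinh (t • R) * R) t := by
  refine (((hasDerivAt_exp_smul_const R t).add (hasDerivAt_exp_neg_smul R t)).const_smul
    (2:ℝ)⁻¹).congr_deriv ?_
  rw [msinh, smul_mul_assoc, sub_mul, mul_neg, ← sub_eq_add_neg]
  -- the two sides differ only in the ring instance on matrices they go through
  rfl

theorem hasDerivAt_msinh_smul (R : Matrix (Fin d) (Fin d) ℝ) (t : ℝ) :
    HasDerivAt (fun s : ℝ => msinh (s • R)) (mcosh (t • R) * R) t := by
  refine (((hasDerivAt_exp_smul_const R t).sub (hasDerivAt_exp_neg_smul R t)).const_smul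
    (2:ℝ)⁻¹).congr_deriv ?_
  rw [mcosh, smul_mul_assoc, add_mul, mul_neg, sub_neg_eq_add]
  rfl

theorem hasDerivAt_mul_mcosh_add_mul_msinh (X Y R : Matrix (Fin d) (Fin d) ℝ) (t : ℝ) :
    HasDerivAt (fun s : ℝ => X * mcosh (s • R) + Y * msinh (s • R))
      ((X * msinh (t • R) + Y * mcosh (t • R)) * R) t := by
  refine (((hasDerivAt_mcosh_smul R t).const_mul X).add
    ((hasDerivAt_msinh_smul R t).const_mul Y)).congr_deriv ?_
  rw [add_mul, mul_assoc, mul_assoc]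

end Hyperbolic

theorem stmt_0_general (d : ℕ) (T : ℝ) (hT : 0 < T)
    (Q M v w R : Matrix (Fin d) (Fin d) ℝ)
    (hQ : IsUnit Q)
    (hM : Mᵀ * (Qᵀ * Q)⁻¹ = (Qᵀ * Q)⁻¹ * M)
    (vbar wbar : Matrix (Fin d) (Fin d) ℝ)
    (hvbar : vbar = Q * ((2:ℝ) • v + Mᵀ * (Qᵀ * Q)⁻¹ * M) * Qᵀ)
    (hwbar : wbar = Q * ((2:ℝ) • w - (Qᵀ * Q)⁻¹ * M) * Qᵀ)
    (hRR : R * R = vbar)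
    (hinv : ∀ t ∈ Set.Icc (0:ℝ) T, IsUnit (R * mcosh (t • R) + wbar * msinh (t • R)))
    (k ψ : ℝ → Matrix (Fin d) (Fin d) ℝ)
    (hk : ∀ t, k t = -((R * mcosh (t • R) + wbar * msinh (t • R))⁻¹ *
      (R * msinh (t • R) + wbar * mcosh (t • R))))
    (hψ : ∀ t, ψ t = (2:ℝ)⁻¹ • ((Qᵀ * Q)⁻¹ * M) - (2:ℝ)⁻¹ • (Q⁻¹ * R * k t * Qᵀ⁻¹)) :
    ψ 0 = w ∧ ∀ t ∈ Set.Icc (0:ℝ) T,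
      HasDerivAt ψ (ψ t * M + Mᵀ * ψ t - (2:ℝ) • (ψ t * (Qᵀ * Q) * ψ t) + v) t := by
  have hQdet : IsUnit Q.det := (isUnit_iff_isUnit_det Q).1 hQ
  have hQtdet : IsUnit Qᵀ.det := by rwa [det_transpose]
  have hPdet : IsUnit (Qᵀ * Q).det := by rw [det_mul]; exact hQtdet.mul hQdet
  have hRdet : IsUnit R.det := by
    have h0 := hinv 0 ⟨le_rfl, hT.le⟩
    rw [zero_smul, mcosh_zero, msinh_zero, mul_one, mul_zero, add_zero] at h0
    exact (isUnit_iff_isUnit_det R).1 h0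
  constructor
  · have hk0 : k 0 = -(R⁻¹ * wbar) := by
      simp only [hk, zero_smul, mcosh_zero, msinh_zero, mul_one, mul_zero, add_zero, zero_add]
    rw [hψ, hk0, hwbar]
    simp only [mul_neg, neg_mul, mul_assoc, mul_nonsing_inv_cancel_left _ _ hRdet,
      nonsing_inv_mul_cancel_left _ _ hQdet, mul_nonsing_inv _ hQtdet, mul_one]
    module
  · intro t ht
    have hk' : HasDerivAt k (k t * R * k t - R) t := by
      have hB := hasDerivAt_mul_mcosh_add_mul_msinh wbar R R t
      simp only [add_comm (wbar * mcosh _), add_comm (wbar * msinh _)] at hB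
      simp only [funext hk, nonsing_inv_eq_ringInverse]
      exact hasDerivAt_neg_ringInverse_mul (hasDerivAt_mul_mcosh_add_mul_msinh R wbar R t) hB
        (hinv t ht)
    have hSP : Qᵀ⁻¹ * (Qᵀ * Q) * Q⁻¹ = 1 := by
      rw [nonsing_inv_mul_cancel_left _ _ hQtdet, mul_nonsing_inv _ hQdet]
    have hRRconj : Q⁻¹ * (R * R) * Qᵀ⁻¹ = (2:ℝ) • v + Mᵀ * ((Qᵀ * Q)⁻¹ * M) := by
      rw [hRR, hvbar, mul_assoc Q, nonsing_inv_mul_cancel_left _ _ hQdet,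
        mul_nonsing_inv_cancel_right _ _ hQtdet, mul_assoc Mᵀ]
    have hX := hk'.conj_mul_riccati hSP
    rw [hRRconj] at hX
    exact hasDerivAt_riccati_of_shift hX (by rw [← hM, nonsing_inv_mul_cancel_right _ _ hPdet])
      (mul_nonsing_inv_cancel_left _ _ hPdet) hψ

theorem stmt_0 (d : ℕ) (hd : 1 ≤ d) (T : ℝ) (hT : 0 < T)
    (Q M v w R : Matrix (Fin d) (Fin d) ℝ)
    (hQ : IsUnit Q)
    (hM : Mᵀ * (Qᵀ * Q)⁻¹ = (Qᵀ * Q)⁻¹ * M)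
    (hv : v.IsSymm) (hw : w.IsSymm) (hR : R.IsSymm)
    (vbar wbar : Matrix (Fin d) (Fin d) ℝ)
    (hvbar : vbar = Q * ((2:ℝ) • v + Mᵀ * (Qᵀ * Q)⁻¹ * M) * Qᵀ)
    (hwbar : wbar = Q * ((2:ℝ) • w - (Qᵀ * Q)⁻¹ * M) * Qᵀ)
    (hRR : R * R = vbar)
    (hinv : ∀ t ∈ Set.Icc (0:ℝ) T, IsUnit (R * mcosh (t • R) + wbar * msinh (t • R)))
    (k ψ : ℝ → Matrix (Fin d) (Fin d) ℝ)
    (hk : ∀ t, k t = -((R * mcosh (t • R) + wbar * msinh (t • R))⁻¹ *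
      (R * msinh (t • R) + wbar * mcosh (t • R))))
    (hψ : ∀ t, ψ t = (2:ℝ)⁻¹ • ((Qᵀ * Q)⁻¹ * M) - (2:ℝ)⁻¹ • (Q⁻¹ * R * k t * Qᵀ⁻¹)) :
    ψ 0 = w ∧ ∀ t ∈ Set.Icc (0:ℝ) T,
      HasDerivAt ψ (ψ t * M + Mᵀ * ψ t - (2:ℝ) • (ψ t * (Qᵀ * Q) * ψ t) + v) t :=
  stmt_0_general d T hT Q M v w R hQ hM vbar wbar hvbar hwbar hRR hinv k ψ hk hψ
end

section
/- Let d ≥ 1, let M′, Q, w′ be real d×d matrices with w′ invertible, and suppose that for every t ∈ [0,T] the matrix (w′)⁻¹ + 2∫₀ᵗ exp(M′s)·QᵀQ·exp((M′)ᵀs) ds is invertible. Then the function Z(t) := exp((M′)ᵀt)·((w′)⁻¹ + 2∫₀ᵗ exp(M′s)·QᵀQ·exp((M′)ᵀs) ds)⁻¹·exp(M′t) satisfies Z(0) = w′ and, for every t ∈ [0,T], Z is differentiable at t with Z′(t) = Z(t)M′ + (M′)ᵀZ(t) − 2Z(t)QᵀQZ(t). -/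
/-!
By the product rule and `(G⁻¹)' = -G⁻¹ G' G⁻¹`, the derivative of `Z = e^{tN} G⁻¹ e^{tM}` is
`Z M + N Z - e^{tN} G⁻¹ G' G⁻¹ e^{tM}`. Since `G' = c e^{tM} P e^{tN}` by the fundamental theorem
of calculus, the last term is `c Z P Z`: the exponentials of the integrand are exactly the outer
factors of `Z`. This works in any real Banach algebra; the theorem is the case `N = Mᵀ`,
`P = QᵀQ`, `c = 2` for matrices.
-/

open Matrix NormedSpace

attribute [local instance] Matrix.linftyOpNormedRing Matrix.linftyOpNormedAlgebra

theorem HasDerivAt.ringInverse_s3 {𝕜 R : Type*} [NontriviallyNormedField 𝕜] [NormedRing R]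
    [HasSummableGeomSeries R] [NormedAlgebra 𝕜 R] {f : 𝕜 → R} {f' : R} {t : 𝕜}
    (hf : HasDerivAt f f' t) (ht : IsUnit (f t)) :
    HasDerivAt (fun u => Ring.inverse (f u))
      (-(Ring.inverse (f t) * f' * Ring.inverse (f t))) t := by
  obtain ⟨x, hx⟩ := ht
  have hx' : (↑x⁻¹ : R) = Ring.inverse (f t) := by rw [← hx, Ring.inverse_unit]
  have h := (hx ▸ hasFDerivAt_ringInverse (𝕜 := 𝕜) x).comp_hasDerivAt t hf
  simpa only [Function.comp_def, hx', _root_.neg_apply,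
    ContinuousLinearMap.mulLeftRight_apply] using h

section BanachAlgebra

variable {𝔸 : Type*} [NormedRing 𝔸] [NormedAlgebra ℝ 𝔸] [CompleteSpace 𝔸]

theorem hasDerivAt_integral_exp_smul_mul_mul_exp_smul (M N P : 𝔸) (t : ℝ) :
    HasDerivAt (fun u => ∫ s in (0:ℝ)..u, exp (s • M) * P * exp (s • N))
      (exp (t • M) * P * exp (t • N)) t := by
  have hcont : Continuous fun s : ℝ => exp (s • M) * P * exp (s • N) :=
    (((differentiable_exp_smul_const ℝ M).continuous.mul continuous_const).mul
      (differentiable_exp_smul_const ℝ N).continuous)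
  exact (hcont.integral_hasStrictDerivAt 0 t).hasDerivAt

theorem hasDerivAt_exp_smul_mul_ringInverse_mul_exp_smul (M N : 𝔸) {G : ℝ → 𝔸} {G' : 𝔸}
    {t : ℝ} (hG : HasDerivAt G G' t) (ht : IsUnit (G t)) :
    HasDerivAt (fun u => exp (u • N) * Ring.inverse (G u) * exp (u • M))
      (exp (t • N) * Ring.inverse (G t) * exp (t • M) * M
        + N * (exp (t • N) * Ring.inverse (G t) * exp (t • M))
        - exp (t • N) * Ring.inverse (G t) * G' * Ring.inverse (G t) * exp (t • M)) t := by
  have h := ((hasDerivAt_exp_smul_const' (𝕂 := ℝ) N t).mul (hG.ringInverse_s3 ht)).mul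
    (hasDerivAt_exp_smul_const (𝕂 := ℝ) M t)
  refine h.congr_deriv ?_
  simp only [Pi.mul_apply, add_mul, mul_neg, neg_mul, mul_assoc, sub_eq_add_neg]
  abel

theorem hasDerivAt_riccati (M N P g₀ : 𝔸) (c : ℝ) {t : ℝ}
    (ht : IsUnit (g₀ + c • ∫ s in (0:ℝ)..t, exp (s • M) * P * exp (s • N))) :
    let Z := fun u : ℝ =>
      exp (u • N) * Ring.inverse (g₀ + c • ∫ s in (0:ℝ)..u, exp (s • M) * P * exp (s • N))
        * exp (u • M)
    HasDerivAt Z (Z t * M + N * Z t - c • (Z t * P * Z t)) t := by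
  have hG : HasDerivAt (fun u => g₀ + c • ∫ s in (0:ℝ)..u, exp (s • M) * P * exp (s • N))
      (c • (exp (t • M) * P * exp (t • N))) t :=
    ((hasDerivAt_integral_exp_smul_mul_mul_exp_smul M N P t).const_smul c).const_add g₀
  refine (hasDerivAt_exp_smul_mul_ringInverse_mul_exp_smul M N hG ht).congr_deriv ?_
  simp only [mul_smul_comm, smul_mul_assoc, mul_assoc]

end BanachAlgebra

theorem stmt_3_general (d : ℕ) (T : ℝ)
    (M' Q w' : Matrix (Fin d) (Fin d) ℝ)
    (hw' : IsUnit w')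
    (G : ℝ → Matrix (Fin d) (Fin d) ℝ)
    (hG : ∀ t, G t = w'⁻¹ +
      (2:ℝ) • ∫ s in (0:ℝ)..t, exp (s • M') * (Qᵀ * Q) * exp (s • M'ᵀ))
    (hGinv : ∀ t ∈ Set.Icc (0:ℝ) T, IsUnit (G t))
    (Z : ℝ → Matrix (Fin d) (Fin d) ℝ)
    (hZ : ∀ t, Z t = exp (t • M'ᵀ) * (G t)⁻¹ * exp (t • M')) :
    Z 0 = w' ∧ ∀ t ∈ Set.Icc (0:ℝ) T,
      HasDerivAt Z (Z t * M' + M'ᵀ * Z t - (2:ℝ) • (Z t * (Qᵀ * Q) * Z t)) t := by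
  have hZ_eq : Z = fun u => exp (u • M'ᵀ) * Ring.inverse
      (w'⁻¹ + (2:ℝ) • ∫ s in (0:ℝ)..u, exp (s • M') * (Qᵀ * Q) * exp (s • M'ᵀ)) * exp (u • M') := by
    funext u
    rw [hZ, hG, Matrix.nonsing_inv_eq_ringInverse]
  constructor
  · rw [hZ, hG]
    simp [Matrix.nonsing_inv_nonsing_inv _ ((Matrix.isUnit_iff_isUnit_det _).mp hw')]
  · intro t ht
    rw [hZ_eq]
    exact hasDerivAt_riccati M' M'ᵀ (Qᵀ * Q) w'⁻¹ 2 (hG t ▸ hGinv t ht)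

theorem stmt_3 (d : ℕ) (hd : 1 ≤ d) (T : ℝ) (hT : 0 < T)
    (M' Q w' : Matrix (Fin d) (Fin d) ℝ)
    (hw' : IsUnit w')
    (G : ℝ → Matrix (Fin d) (Fin d) ℝ)
    (hG : ∀ t, G t = w'⁻¹ +
      (2:ℝ) • ∫ s in (0:ℝ)..t, exp (s • M') * (Qᵀ * Q) * exp (s • M'ᵀ))
    (hGinv : ∀ t ∈ Set.Icc (0:ℝ) T, IsUnit (G t))
    (Z : ℝ → Matrix (Fin d) (Fin d) ℝ)
    (hZ : ∀ t, Z t = exp (t • M'ᵀ) * (G t)⁻¹ * exp (t • M')) :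
    Z 0 = w' ∧ ∀ t ∈ Set.Icc (0:ℝ) T,
      HasDerivAt Z (Z t * M' + M'ᵀ * Z t - (2:ℝ) • (Z t * (Qᵀ * Q) * Z t)) t :=
  stmt_3_general d T M' Q w' hw' G hG hGinv Z hZ
end

section
/- Let d ≥ 1, let M, Q be real d×d matrices, let v, w be symmetric real d×d matrices, and let L be the 2d×2d block matrix L = [[M, 2QᵀQ],[v, −Mᵀ]]. For t ∈ ℝ, write exp(tL) in d×d blocks as [[ψ₁₁(t), ψ₁₂(t)],[ψ₂₁(t), ψ₂₂(t)]], and suppose that w·ψ₁₂(t) + ψ₂₂(t) is invertible for every t ∈ [0,T]. Then ψ(t) := (w·ψ₁₂(t) + ψ₂₂(t))⁻¹·(w·ψ₁₁(t) + ψ₂₁(t)) satisfies ψ(0) = w and, for every t ∈ [0,T], ψ is differentiable at t with ψ′(t) = ψ(t)M + Mᵀψ(t) − 2ψ(t)QᵀQψ(t) + v. -/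
/-!
Radon's lemma. The first block row `(N, P) = (w ψ₁₁ + ψ₂₁, w ψ₁₂ + ψ₂₂)` of
`[[w, 1], [0, 0]] exp (t L)` solves the linear equation `(N, P)' = (N, P) L`. In any Banach algebra,
if `(N, P)' = (N, P) [[A, B], [C, D]]` and `P` is invertible, the quotient rule turns this into the
Riccati equation `ψ' = ψ A - D ψ - ψ B ψ + C` for `ψ = P⁻¹ N`; with `L` as given this is the claimed
equation. At `t = 0` we have `(N, P) = (w, 1)`.
-/

open Matrix NormedSpace

attribute [local instance] Matrix.linftyOpNormedRing Matrix.linftyOpNormedAlgebra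

section RingInverse

variable {𝕜 R : Type*} [NontriviallyNormedField 𝕜] [NormedRing R] [NormedAlgebra 𝕜 R]
  [CompleteSpace R] {t : 𝕜}

theorem HasDerivAt.ringInverse_s5 {P : 𝕜 → R} {P' : R} (hP : HasDerivAt P P' t) (hu : IsUnit (P t)) :
    HasDerivAt (fun u => Ring.inverse (P u))
      (-(Ring.inverse (P t) * P' * Ring.inverse (P t))) t := by
  obtain ⟨x, hx⟩ := hu
  refine ((hasFDerivAt_ringInverse (𝕜 := 𝕜) x).comp_hasDerivAt_of_eq t hP hx).congr_deriv ?_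
  simp [← hx, ContinuousLinearMap.mulLeftRight_apply]

theorem HasDerivAt.ringInverse_mul_of_linear {N P : 𝕜 → R} {A B C D : R}
    (hN : HasDerivAt N (N t * A + P t * C) t) (hP : HasDerivAt P (N t * B + P t * D) t)
    (hu : IsUnit (P t)) :
    HasDerivAt (fun u => Ring.inverse (P u) * N u)
      (Ring.inverse (P t) * N t * A - D * (Ring.inverse (P t) * N t)
        - Ring.inverse (P t) * N t * B * (Ring.inverse (P t) * N t) + C) t := by
  refine ((hP.ringInverse_s5 hu).mul hN).congr_deriv ?_
  have hinv : Ring.inverse (P t) * P t = 1 := Ring.inverse_mul_cancel _ hu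
  simp only [mul_add, add_mul, neg_add, neg_mul, ← mul_assoc, hinv, one_mul]
  abel

end RingInverse

section Blocks

variable {𝕜 n : Type*} [NontriviallyNormedField 𝕜] [Fintype n] [DecidableEq n] {t : 𝕜}

theorem HasDerivAt.matrix_submatrix {m : Type*} [Fintype m] [DecidableEq m]
    {f : 𝕜 → Matrix n n 𝕜} {f' : Matrix n n 𝕜} (hf : HasDerivAt f f' t) (e₁ e₂ : m → n) :
    HasDerivAt (fun u => (f u).submatrix e₁ e₂) (f'.submatrix e₁ e₂) t :=
  let submatrixCLM : Matrix n n 𝕜 →L[𝕜] Matrix m m 𝕜 :=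
    { toFun := fun X => X.submatrix e₁ e₂
      map_add' := fun _ _ => rfl
      map_smul' := fun _ _ => rfl
      cont := continuous_id.matrix_submatrix e₁ e₂ }
  submatrixCLM.hasFDerivAt.comp_hasDerivAt t hf

theorem HasDerivAt.toBlocks_of_mul_fromBlocks {Y : 𝕜 → Matrix (n ⊕ n) (n ⊕ n) 𝕜}
    {A B C D : Matrix n n 𝕜} (hY : HasDerivAt Y (Y t * fromBlocks A B C D) t) :
    HasDerivAt (fun u => (Y u).toBlocks₁₁) ((Y t).toBlocks₁₁ * A + (Y t).toBlocks₁₂ * C) t ∧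
      HasDerivAt (fun u => (Y u).toBlocks₁₂) ((Y t).toBlocks₁₁ * B + (Y t).toBlocks₁₂ * D) t := by
  rw [← fromBlocks_toBlocks (Y t), fromBlocks_multiply] at hY
  exact ⟨hY.matrix_submatrix Sum.inl Sum.inl, hY.matrix_submatrix Sum.inl Sum.inr⟩

end Blocks

section BlockProducts

variable {α l m n o p q : Type*} [Fintype l] [Fintype m] [NonUnitalNonAssocSemiring α]
  (A : Matrix n l α) (B : Matrix n m α) (C : Matrix o l α) (D : Matrix o m α)
  (E : Matrix (l ⊕ m) (p ⊕ q) α)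

theorem toBlocks₁₁_fromBlocks_mul :
    (fromBlocks A B C D * E).toBlocks₁₁ = A * E.toBlocks₁₁ + B * E.toBlocks₂₁ := by
  conv_lhs => rw [← fromBlocks_toBlocks E]
  rw [fromBlocks_multiply, toBlocks_fromBlocks₁₁]

theorem toBlocks₁₂_fromBlocks_mul :
    (fromBlocks A B C D * E).toBlocks₁₂ = A * E.toBlocks₁₂ + B * E.toBlocks₂₂ := by
  conv_lhs => rw [← fromBlocks_toBlocks E]
  rw [fromBlocks_multiply, toBlocks_fromBlocks₁₂]

end BlockProducts

theorem stmt_5_general (d : ℕ) (T : ℝ)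
    (M Q v w : Matrix (Fin d) (Fin d) ℝ)
    (L : Matrix (Fin d ⊕ Fin d) (Fin d ⊕ Fin d) ℝ)
    (hL : L = Matrix.fromBlocks M ((2:ℝ) • (Qᵀ * Q)) v (-Mᵀ))
    (ψ₁₁ ψ₁₂ ψ₂₁ ψ₂₂ : ℝ → Matrix (Fin d) (Fin d) ℝ)
    (hψ₁₁ : ∀ t, ψ₁₁ t = (NormedSpace.exp (t • L)).toBlocks₁₁)
    (hψ₁₂ : ∀ t, ψ₁₂ t = (NormedSpace.exp (t • L)).toBlocks₁₂)
    (hψ₂₁ : ∀ t, ψ₂₁ t = (NormedSpace.exp (t • L)).toBlocks₂₁)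
    (hψ₂₂ : ∀ t, ψ₂₂ t = (NormedSpace.exp (t • L)).toBlocks₂₂)
    (hinv : ∀ t ∈ Set.Icc (0:ℝ) T, IsUnit (w * ψ₁₂ t + ψ₂₂ t))
    (ψ : ℝ → Matrix (Fin d) (Fin d) ℝ)
    (hψ : ∀ t, ψ t = (w * ψ₁₂ t + ψ₂₂ t)⁻¹ * (w * ψ₁₁ t + ψ₂₁ t)) :
    ψ 0 = w ∧ ∀ t ∈ Set.Icc (0:ℝ) T,
      HasDerivAt ψ (ψ t * M + Mᵀ * ψ t - (2:ℝ) • (ψ t * (Qᵀ * Q) * ψ t) + v) t := by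
  refine ⟨?_, fun t ht => ?_⟩
  · simp [hψ, hψ₁₁, hψ₁₂, hψ₂₁, hψ₂₂, ← fromBlocks_one]
  set Y : ℝ → Matrix (Fin d ⊕ Fin d) (Fin d ⊕ Fin d) ℝ := fun u => fromBlocks w 1 0 0 * exp (u • L)
  have hY : HasDerivAt Y (Y t * L) t := by
    rw [show Y t * L = fromBlocks w 1 0 0 * (exp (t • L) * L) from mul_assoc _ _ _]
    exact (hasDerivAt_exp_smul_const L t).const_mul _
  rw [hL] at hY
  obtain ⟨hN, hP⟩ := hY.toBlocks_of_mul_fromBlocks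
  simp only [Y, toBlocks₁₁_fromBlocks_mul, toBlocks₁₂_fromBlocks_mul, one_mul, ← hψ₁₁, ← hψ₁₂,
    ← hψ₂₁, ← hψ₂₂] at hN hP
  obtain rfl : ψ = fun u => Ring.inverse (w * ψ₁₂ u + ψ₂₂ u) * (w * ψ₁₁ u + ψ₂₁ u) :=
    funext fun u => by rw [hψ, nonsing_inv_eq_ringInverse]
  refine (HasDerivAt.ringInverse_mul_of_linear (N := fun u => w * ψ₁₁ u + ψ₂₁ u)
    (P := fun u => w * ψ₁₂ u + ψ₂₂ u) hN hP (hinv t ht)).congr_deriv ?_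
  simp only [neg_mul, sub_neg_eq_add, mul_smul_comm, smul_mul_assoc]

theorem stmt_5 (d : ℕ) (hd : 1 ≤ d) (T : ℝ) (hT : 0 < T)
    (M Q v w : Matrix (Fin d) (Fin d) ℝ)
    (hv : v.IsSymm) (hw : w.IsSymm)
    (L : Matrix (Fin d ⊕ Fin d) (Fin d ⊕ Fin d) ℝ)
    (hL : L = Matrix.fromBlocks M ((2:ℝ) • (Qᵀ * Q)) v (-Mᵀ))
    (ψ₁₁ ψ₁₂ ψ₂₁ ψ₂₂ : ℝ → Matrix (Fin d) (Fin d) ℝ)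
    (hψ₁₁ : ∀ t, ψ₁₁ t = (NormedSpace.exp (t • L)).toBlocks₁₁)
    (hψ₁₂ : ∀ t, ψ₁₂ t = (NormedSpace.exp (t • L)).toBlocks₁₂)
    (hψ₂₁ : ∀ t, ψ₂₁ t = (NormedSpace.exp (t • L)).toBlocks₂₁)
    (hψ₂₂ : ∀ t, ψ₂₂ t = (NormedSpace.exp (t • L)).toBlocks₂₂)
    (hinv : ∀ t ∈ Set.Icc (0:ℝ) T, IsUnit (w * ψ₁₂ t + ψ₂₂ t))
    (ψ : ℝ → Matrix (Fin d) (Fin d) ℝ)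
    (hψ : ∀ t, ψ t = (w * ψ₁₂ t + ψ₂₂ t)⁻¹ * (w * ψ₁₁ t + ψ₂₁ t)) :
    ψ 0 = w ∧ ∀ t ∈ Set.Icc (0:ℝ) T,
      HasDerivAt ψ (ψ t * M + Mᵀ * ψ t - (2:ℝ) • (ψ t * (Qᵀ * Q) * ψ t) + v) t :=
  stmt_5_general d T M Q v w L hL ψ₁₁ ψ₁₂ ψ₂₁ ψ₂₂ hψ₁₁ hψ₁₂ hψ₂₁ hψ₂₂ hinv ψ hψ
end

section
/- Let d ≥ 1 and let A be a real d×d matrix such that every eigenvalue λ of A (i.e., every element of the spectrum of the complexification of A, viewed as a complex d×d matrix) satisfies Re(λ) < 0. Then exp(τ·A) tends to the zero matrix as τ → ∞. -/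
/-!
Over `ℂ` the space splits into generalized eigenspaces of the complexified matrix `M`. On the
one for `μ`, `M - μ` acts nilpotently, so `exp (τ M) w = e^{τμ} ∑_{j<k} τ^j/j! (M - μ)^j w` is a
finite sum of terms `τ^j e^{τμ}`, each tending to `0` because `Re μ < 0`. The real exponential
is recovered as the real part of the complex one.
-/

open Matrix NormedSpace

attribute [local instance] Matrix.linftyOpNormedRing Matrix.linftyOpNormedAlgebra

open Filter Topology Finset Nat

theorem Complex.tendsto_pow_mul_exp_mul_atTop_nhds_zero {μ : ℂ} (hμ : μ.re < 0) (j : ℕ) :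
    Tendsto (fun τ : ℝ => (τ : ℂ) ^ j * Complex.exp (τ * μ)) atTop (𝓝 0) := by
  rw [tendsto_zero_iff_norm_tendsto_zero]
  refine (tendsto_rpow_mul_exp_neg_mul_atTop_nhds_zero j (-μ.re) (neg_pos.2 hμ)).congr' ?_
  filter_upwards [eventually_ge_atTop 0] with τ hτ
  rw [norm_mul, Complex.norm_exp, norm_pow, Complex.norm_real, Real.norm_of_nonneg hτ,
    Real.rpow_natCast]
  simp [Complex.mul_re, mul_comm]

namespace Matrix

theorem tendsto_of_forall_tendsto_mulVec {α m n R : Type*} [Fintype n] [DecidableEq n]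
    [NonAssocSemiring R] [TopologicalSpace R] {l : Filter α} {F : α → Matrix m n R}
    {X : Matrix m n R} (h : ∀ v, Tendsto (fun a => F a *ᵥ v) l (𝓝 (X *ᵥ v))) :
    Tendsto F l (𝓝 X) :=
  tendsto_pi_nhds.2 fun i => tendsto_pi_nhds.2 fun j => by
    simpa [mulVec_single_one] using tendsto_pi_nhds.1 (h (Pi.single j 1)) i

theorem mem_spectrum_of_mem_maxGenEigenspace {n K : Type*} [Fintype n] [DecidableEq n] [Field K]
    {M : Matrix n n K} {μ : K} {w : n → K} (hw : w ∈ Module.End.maxGenEigenspace M.toLin' μ)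
    (hw0 : w ≠ 0) :
    μ ∈ spectrum K M := by
  have hμ : Module.End.HasUnifEigenvalue M.toLin' μ ⊤ := (Submodule.ne_bot_iff _).2 ⟨w, hw, hw0⟩
  rw [← spectrum_toLin']
  exact ((Module.End.hasUnifEigenvalue_iff_hasUnifEigenvalue_one (by simp)).1 hμ).mem_spectrum

variable {n 𝕂 : Type*} [Fintype n] [DecidableEq n] [RCLike 𝕂]

theorem exp_mulVec_of_pow_mulVec_eq_zero {N : Matrix n n 𝕂} {w : n → 𝕂} {k : ℕ}
    (h : N ^ k *ᵥ w = 0) : exp N *ᵥ w = ∑ j ∈ range k, (j ! : 𝕂)⁻¹ • (N ^ j *ᵥ w) := by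
  have hseries : HasSum (fun j => (j ! : 𝕂)⁻¹ • (N ^ j *ᵥ w)) (exp N *ᵥ w) := by
    convert (exp_series_hasSum_exp' (𝕂 := 𝕂) N).map (mulVec.addMonoidHomLeft w)
        (continuous_id.matrix_mulVec continuous_const) using 1
    · funext j
      exact (smul_mulVec _ _ _).symm
    · rfl
  refine hseries.unique (hasSum_sum_of_ne_finset_zero fun j hj => ?_)
  obtain ⟨i, rfl⟩ := Nat.exists_eq_add_of_le (not_lt.1 (mem_range.not.1 hj))
  rw [add_comm, pow_add, ← mulVec_mulVec, h, mulVec_zero, smul_zero]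

theorem exp_smul_mulVec_of_pow_sub_mulVec_eq_zero {M : Matrix n n 𝕂} {μ : 𝕂} {w : n → 𝕂} {k : ℕ}
    (h : (M - μ • 1) ^ k *ᵥ w = 0) (t : 𝕂) :
    exp (t • M) *ᵥ w =
      ∑ j ∈ range k, ((j ! : 𝕂)⁻¹ * (t ^ j * exp (t * μ))) • ((M - μ • 1) ^ j *ᵥ w) := by
  set N := M - μ • 1
  have hsplit : t • M = algebraMap 𝕂 _ (t * μ) + t • N := by
    rw [Algebra.algebraMap_eq_smul_one, smul_sub, smul_smul]; abel
  have hN : (t • N) ^ k *ᵥ w = 0 := by rw [smul_pow, smul_mulVec, h, smul_zero]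
  have hexp : exp (algebraMap 𝕂 (Matrix n n 𝕂) (t * μ)) = algebraMap 𝕂 _ (exp (t * μ)) :=
    (algebraMap_exp_comm _).symm
  rw [hsplit, exp_add_of_commute _ _ (Algebra.commute_algebraMap_left _ _), hexp,
    ← Algebra.smul_def, smul_mulVec, exp_mulVec_of_pow_mulVec_eq_zero hN, smul_sum]
  refine sum_congr rfl fun j _ => ?_
  rw [smul_pow, smul_mulVec, smul_smul, smul_smul]
  ring_nf

theorem tendsto_exp_smul_mulVec_of_mem_maxGenEigenspace {M : Matrix n n ℂ} {μ : ℂ} (hμ : μ.re < 0)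
    {w : n → ℂ} (hw : w ∈ Module.End.maxGenEigenspace M.toLin' μ) :
    Tendsto (fun τ : ℝ => exp ((τ : ℂ) • M) *ᵥ w) atTop (𝓝 0) := by
  obtain ⟨k, hk⟩ := (Module.End.mem_maxGenEigenspace _ _ _).1 hw
  have hk' : (M - μ • 1) ^ k *ᵥ w = 0 := by
    rw [← toLinAlgEquiv'_apply, map_pow, map_sub, map_smul, map_one]
    exact hk
  simp_rw [exp_smul_mulVec_of_pow_sub_mulVec_eq_zero hk', ← Complex.exp_eq_exp_ℂ]
  rw [← sum_const_zero (s := range k)]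
  refine tendsto_finsetSum _ fun j _ => ?_
  simpa using ((Complex.tendsto_pow_mul_exp_mul_atTop_nhds_zero hμ j).const_mul
    (j ! : ℂ)⁻¹).smul_const ((M - μ • 1) ^ j *ᵥ w)

theorem tendsto_exp_smul_atTop_nhds_zero_of_forall_re_neg {M : Matrix n n ℂ}
    (hM : ∀ μ ∈ spectrum ℂ M, μ.re < 0) :
    Tendsto (fun τ : ℝ => exp ((τ : ℂ) • M)) atTop (𝓝 0) := by
  refine tendsto_of_forall_tendsto_mulVec fun v => ?_
  have hv : v ∈ ⨆ μ, Module.End.maxGenEigenspace M.toLin' μ := by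
    rw [Module.End.iSup_maxGenEigenspace_eq_top]; exact Submodule.mem_top
  have hzero : Tendsto (fun τ : ℝ => exp ((τ : ℂ) • M) *ᵥ 0) atTop (𝓝 0) := by simp
  rw [zero_mulVec]
  refine Submodule.iSup_induction
    (motive := fun v => Tendsto (fun τ : ℝ => exp ((τ : ℂ) • M) *ᵥ v) atTop (𝓝 0)) _ hv
    (fun μ w hw => ?_) hzero fun x y hx hy => by simpa [mulVec_add] using hx.add hy
  rcases eq_or_ne w 0 with rfl | hw0
  · exact hzero
  · exact tendsto_exp_smul_mulVec_of_mem_maxGenEigenspace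
      (hM μ (mem_spectrum_of_mem_maxGenEigenspace hw hw0)) hw

theorem map_ofReal_exp (A : Matrix n n ℝ) : (exp A).map ((↑) : ℝ → ℂ) = exp (A.map (↑)) :=
  map_exp Complex.ofRealHom.mapMatrix (continuous_id.matrix_map Complex.continuous_ofReal) A

end Matrix

theorem stmt_6_general (d : ℕ)
    (A : Matrix (Fin d) (Fin d) ℝ)
    (hspec : ∀ lam ∈ spectrum ℂ (A.map ((↑) : ℝ → ℂ)), lam.re < 0) :
    Filter.Tendsto (fun τ : ℝ => exp (τ • A)) Filter.atTop (nhds 0) := by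
  have hcomplex : Tendsto (fun τ : ℝ => (exp (τ • A)).map ((↑) : ℝ → ℂ)) atTop (𝓝 0) := by
    have hmap (τ : ℝ) : (τ • A).map ((↑) : ℝ → ℂ) = (τ : ℂ) • A.map (↑) := by
      ext; simp
    simpa only [map_ofReal_exp, hmap] using tendsto_exp_smul_atTop_nhds_zero_of_forall_re_neg hspec
  simpa [Function.comp_def] using
    ((continuous_id.matrix_map Complex.continuous_re).tendsto 0).comp hcomplex

theorem stmt_6 (d : ℕ) (hd : 1 ≤ d)
    (A : Matrix (Fin d) (Fin d) ℝ)
    (hspec : ∀ lam ∈ spectrum ℂ (A.map ((↑) : ℝ → ℂ)), lam.re < 0) :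
    Filter.Tendsto (fun τ : ℝ => exp (τ • A)) Filter.atTop (nhds 0) :=
  stmt_6_general d A hspec
end

section
/- Let d ≥ 1, let M, Q be real d×d matrices, let v, w be symmetric real d×d matrices, and let ψ′₀ be a symmetric solution of the algebraic Riccati equation ψ′₀M + Mᵀψ′₀ − 2ψ′₀QᵀQψ′₀ + v = 0 such that every eigenvalue of the complexification of M′ := M − 2QᵀQψ′₀ has negative real part. Assume w − ψ′₀ is invertible and that for every t ≥ 0 the matrix (w − ψ′₀)⁻¹ + 2∫₀ᵗ exp(M′s)·QᵀQ·exp((M′)ᵀs) ds is invertible, and that the limiting matrix (w − ψ′₀)⁻¹ + 2∫₀^∞ exp(M′s)·QᵀQ·exp((M′)ᵀs) ds (the improper integral converges under the eigenvalue assumption) is invertible. Then the variation-of-constants solution ψ(t) := ψ′₀ + exp((M′)ᵀt)·[(w − ψ′₀)⁻¹ + 2∫₀ᵗ exp(M′s)·QᵀQ·exp((M′)ᵀs) ds]⁻¹·exp(M′t) converges to ψ′₀ as t → ∞. -/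
/-!
If every eigenvalue of `M'` has negative real part, then every eigenvalue of `exp M'` has modulus
less than one: an eigenspace of `exp M'` is invariant under the commuting matrix `M'`, so it
contains a common eigenvector, whose `exp M'`-eigenvalue is `exp μ` for an eigenvalue `μ` of `M'`.
Gelfand's formula then makes the powers of `exp M'` decay geometrically, hence
`‖exp (t • M')‖ = O(e^{-εt})`. So the integrand defining `G t` is integrable on `(0, ∞)`,
`G t` tends to the invertible matrix `G ∞`, `(G t)⁻¹` tends to `(G ∞)⁻¹`, and
`ψ t - ψ'₀ = exp (t • M'ᵀ) * (G t)⁻¹ * exp (t • M')` tends to `0`.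
-/

open Matrix NormedSpace

attribute [local instance] Matrix.linftyOpNormedRing Matrix.linftyOpNormedAlgebra

open Filter Topology Asymptotics MeasureTheory
open scoped NNReal

theorem Module.End.HasEigenvalue.exists_hasEigenvector_of_commute {K V : Type*} [Field K]
    [IsAlgClosed K] [AddCommGroup V] [Module K V] [FiniteDimensional K V] {f g : End K V}
    (hfg : Commute f g) {lam : K} (hlam : g.HasEigenvalue lam) :
    ∃ μ v, f.HasEigenvector μ v ∧ g v = lam • v := by
  have hmaps : ∀ x ∈ g.eigenspace lam, f x ∈ g.eigenspace lam :=
    fun x hx => mapsTo_genEigenspace_of_comm hfg.symm lam 1 hx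
  have : Nontrivial (g.eigenspace lam) := Submodule.nontrivial_iff_ne_bot.mpr hlam
  obtain ⟨μ, hμ⟩ := exists_eigenvalue (f.restrict hmaps)
  obtain ⟨v, hv⟩ := hμ.exists_hasEigenvector
  refine ⟨μ, v, ⟨?_, fun h => hv.2 (Subtype.ext h)⟩, mem_eigenspace_iff.mp v.2⟩
  exact eigenspace_restrict_le_eigenspace f hmaps μ ⟨v, hv.1, rfl⟩

theorem isBigO_pow_of_spectralRadius_lt {A : Type*} [NormedRing A] [NormedAlgebra ℂ A]
    [CompleteSpace A] (a : A) {r : ℝ≥0} (h : spectralRadius ℂ a < r) :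
    (fun n : ℕ => a ^ n) =O[atTop] fun n => (r : ℝ) ^ n := by
  refine IsBigO.of_bound 1 ?_
  filter_upwards [(spectrum.gelfand_formula a).eventually_lt_const h,
    eventually_gt_atTop 0] with n hn hn0
  rw [one_div, ENNReal.rpow_inv_lt_iff (by positivity), ENNReal.rpow_natCast,
    ← ENNReal.coe_pow, ENNReal.coe_lt_coe, ← NNReal.coe_lt_coe, coe_nnnorm] at hn
  simpa using hn.le

theorem isBigO_exp_smul_rpow_of_isBigO_pow {𝔸 : Type*} [NormedRing 𝔸] [NormedAlgebra ℝ 𝔸]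
    [CompleteSpace 𝔸] (a : 𝔸) {r : ℝ} (hr0 : 0 < r) (hr1 : r ≤ 1)
    (h : (fun n : ℕ => exp a ^ n) =O[atTop] fun n => r ^ n) :
    (fun t : ℝ => exp (t • a)) =O[atTop] fun t => r ^ t := by
  let +nondep : NormedAlgebra ℚ 𝔸 := .restrictScalars ℚ ℝ 𝔸
  have hsplit (t : ℝ) : exp (t • a) = exp a ^ ⌊t⌋₊ * exp ((t - ⌊t⌋₊) • a) := by
    rw [← NormedSpace.exp_nsmul, ← Nat.cast_smul_eq_nsmul ℝ,
      ← NormedSpace.exp_add_of_commute (((Commute.refl a).smul_left _).smul_right _),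
      ← add_smul, add_sub_cancel]
  obtain ⟨K, hK⟩ := isCompact_Icc.exists_bound_of_continuousOn
    ((exp_continuous.comp (continuous_id.smul continuous_const)).continuousOn :
      ContinuousOn (fun s : ℝ => exp (s • a)) (Set.Icc 0 1))
  have hfract : (fun t : ℝ => exp ((t - ⌊t⌋₊) • a)) =O[atTop] fun _ => (1 : ℝ) := by
    refine IsBigO.of_bound K ?_
    filter_upwards [eventually_ge_atTop 0] with t ht
    simpa using hK _ ⟨sub_nonneg.mpr (Nat.floor_le ht), by linarith [Nat.lt_floor_add_one t]⟩
  have hfloor : (fun t : ℝ => r ^ ⌊t⌋₊) =O[atTop] fun t => r ^ t := by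
    refine IsBigO.of_bound r⁻¹ ?_
    filter_upwards [eventually_ge_atTop 0] with t ht
    rw [Real.norm_of_nonneg (by positivity), Real.norm_of_nonneg (by positivity),
      ← Real.rpow_natCast]
    calc r ^ (⌊t⌋₊ : ℝ) ≤ r ^ (t - 1) :=
          Real.rpow_le_rpow_of_exponent_ge hr0 hr1 (by linarith [Nat.lt_floor_add_one t])
      _ = r⁻¹ * r ^ t := by rw [Real.rpow_sub_one hr0.ne', div_eq_inv_mul]
  have hprod := (h.comp_tendsto tendsto_nat_floor_atTop).mul hfract
  simp only [Function.comp_def, mul_one, ← hsplit] at hprod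
  exact hprod.trans hfloor

theorem integrableOn_Ioi_of_isBigO_exp_neg {E : Type*} [NormedAddCommGroup E] {f : ℝ → E}
    {a b : ℝ} (hb : 0 < b) (hf : ContinuousOn f (Set.Ici a))
    (ho : f =O[atTop] fun t => Real.exp (-b * t)) : IntegrableOn f (Set.Ioi a) :=
  integrableOn_Ici_iff_integrableOn_Ioi (by finiteness) |>.mp <|
    (hf.locallyIntegrableOn measurableSet_Ici).integrableOn_of_isBigO_atTop
      ho ⟨Set.Ioi b, Ioi_mem_atTop b, exp_neg_integrableOn_Ioi b hb⟩

namespace Matrix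

variable {n : Type*} [Fintype n] [DecidableEq n]

theorem exp_mulVec_of_mulVec_eq_smul {𝕂 : Type*} [RCLike 𝕂] (A : Matrix n n 𝕂) {x : n → 𝕂}
    {μ : 𝕂} (hx : A *ᵥ x = μ • x) : exp A *ᵥ x = exp μ • x := by
  have hpow (k : ℕ) : A ^ k *ᵥ x = μ ^ k • x := by
    induction k with
    | zero => simp
    | succ k ih => rw [pow_succ', ← mulVec_mulVec, ih, mulVec_smul, hx, smul_smul, pow_succ]
  have hA := (exp_series_hasSum_exp' (𝕂 := 𝕂) A).map (mulVec.addMonoidHomLeft x)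
    (continuous_id.matrix_mulVec continuous_const)
  refine hA.unique ?_
  convert (exp_series_hasSum_exp' (𝕂 := 𝕂) μ).smul_const x using 2 with k
  simp [mulVec.addMonoidHomLeft, smul_mulVec, hpow, smul_smul]

theorem spectrum_exp_subset_image (A : Matrix n n ℂ) :
    spectrum ℂ (exp A) ⊆ exp '' spectrum ℂ A := by
  intro z hz
  rw [← spectrum_toLin', ← Module.End.hasEigenvalue_iff_mem_spectrum] at hz
  have hcomm : Commute (toLin' A) (toLin' (exp A)) :=
    (Commute.refl A).exp_right.map (toLinAlgEquiv' (R := ℂ) (n := n))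
  obtain ⟨μ, v, hμv, hzv⟩ := hz.exists_hasEigenvector_of_commute hcomm
  refine ⟨μ, spectrum_toLin' A ▸ (Module.End.hasEigenvalue_of_hasEigenvector hμv).mem_spectrum, ?_⟩
  have hAv : A *ᵥ v = μ • v := hμv.apply_eq_smul
  have h : (exp μ - z) • v = 0 := by
    rw [sub_smul, ← exp_mulVec_of_mulVec_eq_smul A hAv]
    exact sub_eq_zero.mpr hzv
  exact sub_eq_zero.mp ((smul_eq_zero.mp h).resolve_right hμv.2)

theorem spectralRadius_exp_lt_one (A : Matrix n n ℂ) (hA : ∀ μ ∈ spectrum ℂ A, μ.re < 0) :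
    spectralRadius ℂ (exp A) < 1 := by
  rcases (spectrum ℂ (exp A)).eq_empty_or_nonempty with h | h
  · simp [spectralRadius, h]
  · refine ENNReal.coe_one ▸ spectrum.spectralRadius_lt_of_forall_lt_of_nonempty h ?_
    rintro _ hz
    obtain ⟨μ, hμ, rfl⟩ := spectrum_exp_subset_image A hz
    rw [← NNReal.coe_lt_coe, coe_nnnorm, ← Complex.exp_eq_exp_ℂ, Complex.norm_exp]
    exact Real.exp_lt_one_iff.mpr (hA μ hμ)

theorem linfty_opNorm_map_ofReal (B : Matrix n n ℝ) : ‖B.map ((↑) : ℝ → ℂ)‖ = ‖B‖ := by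
  simp [linfty_opNorm_def]

theorem exp_map_ofReal (B : Matrix n n ℝ) :
    exp (B.map ((↑) : ℝ → ℂ)) = (exp B).map ((↑) : ℝ → ℂ) :=
  (map_exp ((algebraMap ℝ ℂ).mapMatrix (m := n))
    (continuous_id.matrix_map Complex.continuous_ofReal) B).symm

theorem exists_isBigO_exp_smul_of_forall_re_neg (A : Matrix n n ℝ)
    (hA : ∀ μ ∈ spectrum ℂ (A.map ((↑) : ℝ → ℂ)), μ.re < 0) :
    ∃ ε > 0, (fun t : ℝ => exp (t • A)) =O[atTop] fun t => Real.exp (-ε * t) := by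
  set Ac := A.map ((↑) : ℝ → ℂ)
  obtain ⟨r, hr, hr1⟩ := ENNReal.lt_iff_exists_nnreal_btwn.mp (spectralRadius_exp_lt_one Ac hA)
  have hr0 : 0 < (r : ℝ) := NNReal.coe_pos.mpr (ENNReal.coe_pos.mp (pos_of_gt hr))
  replace hr1 : (r : ℝ) < 1 := by exact_mod_cast hr1
  have hAc := isBigO_exp_smul_rpow_of_isBigO_pow Ac hr0 hr1.le
    (isBigO_pow_of_spectralRadius_lt _ hr)
  have hnorm (t : ℝ) : ‖exp (t • A)‖ = ‖exp (t • Ac)‖ := by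
    rw [← linfty_opNorm_map_ofReal, ← exp_map_ofReal]
    congr 2
    ext
    simp [Ac]
  refine ⟨-Real.log r, neg_pos.mpr (Real.log_neg hr0 hr1), ?_⟩
  refine (isBigO_of_le _ fun t => (hnorm t).le).trans (hAc.congr_right fun t => ?_)
  rw [Real.rpow_def_of_pos hr0, neg_neg]

end Matrix

theorem stmt_8_general (d : ℕ)
    (Q w ψ'₀ : Matrix (Fin d) (Fin d) ℝ)
    (M' : Matrix (Fin d) (Fin d) ℝ)
    (hspec : ∀ lam ∈ spectrum ℂ (M'.map ((↑) : ℝ → ℂ)), lam.re < 0)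
    (G : ℝ → Matrix (Fin d) (Fin d) ℝ)
    (hG : ∀ t, G t = (w - ψ'₀)⁻¹ +
      (2:ℝ) • ∫ s in (0:ℝ)..t, exp (s • M') * (Qᵀ * Q) * exp (s • M'ᵀ))
    (hGinfty : IsUnit ((w - ψ'₀)⁻¹ +
      (2:ℝ) • ∫ s in Set.Ioi (0:ℝ), exp (s • M') * (Qᵀ * Q) * exp (s • M'ᵀ)))
    (ψ : ℝ → Matrix (Fin d) (Fin d) ℝ)
    (hψ : ∀ t, ψ t = ψ'₀ + exp (t • M'ᵀ) * (G t)⁻¹ * exp (t • M')) :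
    Filter.Tendsto ψ Filter.atTop (nhds ψ'₀) := by
  obtain ⟨ε, hε, hdecay⟩ := exists_isBigO_exp_smul_of_forall_re_neg M' hspec
  have hexp : Tendsto (fun t : ℝ => exp (t • M')) atTop (𝓝 0) :=
    hdecay.trans_tendsto (Real.tendsto_exp_atBot.comp
      (tendsto_id.const_mul_atTop_of_neg (neg_lt_zero.mpr hε)))
  have hexpT : Tendsto (fun t : ℝ => exp (t • M'ᵀ)) atTop (𝓝 0) := by
    simpa [Function.comp_def, ← transpose_smul, exp_transpose] using
      (continuous_id.matrix_transpose.tendsto 0).comp hexp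
  set F := fun s : ℝ => exp (s • M') * (Qᵀ * Q) * exp (s • M'ᵀ)
  have hF : F =O[atTop] fun s => Real.exp (-ε * s) := by
    simpa [F, mul_assoc] using
      hdecay.mul (((tendsto_const_nhds (x := Qᵀ * Q)).mul hexpT).isBigO_one ℝ)
  have hFcont : Continuous F := by fun_prop
  have hGlim : Tendsto G atTop (𝓝 ((w - ψ'₀)⁻¹ + (2:ℝ) • ∫ s in Set.Ioi (0:ℝ), F s)) :=
    (tendsto_const_nhds.add ((intervalIntegral_tendsto_integral_Ioi 0
      (integrableOn_Ioi_of_isBigO_exp_neg hε hFcont.continuousOn hF)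
      tendsto_id).const_smul (2:ℝ))).congr fun t => (hG t).symm
  have hGinv := (NormedRing.inverse_continuousAt hGinfty.unit).tendsto.comp hGlim
  simp only [IsUnit.unit_spec, Function.comp_def, ← nonsing_inv_eq_ringInverse] at hGinv
  rw [show ψ = _ from funext hψ]
  simpa using (tendsto_const_nhds (x := ψ'₀)).add ((hexpT.mul hGinv).mul hexp)

theorem stmt_8 (d : ℕ) (hd : 1 ≤ d)
    (M Q v w ψ'₀ : Matrix (Fin d) (Fin d) ℝ)
    (hv : v.IsSymm) (hw : w.IsSymm) (hψ'₀ : ψ'₀.IsSymm)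
    (hARE : ψ'₀ * M + Mᵀ * ψ'₀ - (2:ℝ) • (ψ'₀ * (Qᵀ * Q) * ψ'₀) + v = 0)
    (M' : Matrix (Fin d) (Fin d) ℝ)
    (hM' : M' = M - (2:ℝ) • ((Qᵀ * Q) * ψ'₀))
    (hspec : ∀ lam ∈ spectrum ℂ (M'.map ((↑) : ℝ → ℂ)), lam.re < 0)
    (hwψ : IsUnit (w - ψ'₀))
    (G : ℝ → Matrix (Fin d) (Fin d) ℝ)
    (hG : ∀ t, G t = (w - ψ'₀)⁻¹ +
      (2:ℝ) • ∫ s in (0:ℝ)..t, exp (s • M') * (Qᵀ * Q) * exp (s • M'ᵀ))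
    (hGinv : ∀ t : ℝ, 0 ≤ t → IsUnit (G t))
    (hGinfty : IsUnit ((w - ψ'₀)⁻¹ +
      (2:ℝ) • ∫ s in Set.Ioi (0:ℝ), exp (s • M') * (Qᵀ * Q) * exp (s • M'ᵀ)))
    (ψ : ℝ → Matrix (Fin d) (Fin d) ℝ)
    (hψ : ∀ t, ψ t = ψ'₀ + exp (t • M'ᵀ) * (G t)⁻¹ * exp (t • M')) :
    Filter.Tendsto ψ Filter.atTop (nhds ψ'₀) :=
  stmt_8_general d Q w ψ'₀ M' hspec G hG hGinfty ψ hψ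
end

section
/- Let d ≥ 1, let R be a symmetric positive definite real d×d matrix and let w̄ be a real d×d matrix such that R + w̄ is invertible and such that R·cosh(Rτ) + w̄·sinh(Rτ) is invertible for every τ ≥ 0. Then k(τ) := −(R·cosh(Rτ) + w̄·sinh(Rτ))⁻¹·(R·sinh(Rτ) + w̄·cosh(Rτ)) converges to −I_d as τ → ∞. -/
/-!
With `A = R + w̄`, `B = R - w̄` and `e = exp (τ R)` one has
`R cosh (τ R) + w̄ sinh (τ R) = ½ A e (1 + E)` and `R sinh (τ R) + w̄ cosh (τ R) = ½ A e (1 - E)`,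
where `E = e⁻¹ A⁻¹ B e⁻¹`. The invertible factor `½ A e` cancels, so `k τ = -(1 + E)⁻¹ (1 - E)`,
and `E → 0` because `exp (-τ R) → 0` for positive definite `R`.
-/

open Matrix NormedSpace

attribute [local instance] Matrix.linftyOpNormedRing Matrix.linftyOpNormedAlgebra

open Filter Topology

namespace Matrix

variable {n 𝕜 : Type*} [Fintype n] [DecidableEq n]

noncomputable def cayleyTransform [CommRing 𝕜] (E : Matrix n n 𝕜) : Matrix n n 𝕜 :=
  (1 + E)⁻¹ * (1 - E)

theorem tendsto_cayleyTransform_of_tendsto_zero [NormedField 𝕜] {α : Type*} {l : Filter α}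
    {E : α → Matrix n n 𝕜} (hE : Tendsto E l (𝓝 0)) :
    Tendsto (fun t => cayleyTransform (E t)) l (𝓝 1) := by
  have hinv : ContinuousAt Inv.inv (1 : Matrix n n 𝕜) :=
    continuousAt_matrix_inv _ (by simpa using NormedRing.inverse_continuousAt (1 : 𝕜ˣ))
  have hadd : Tendsto (fun t => 1 + E t) l (𝓝 1) := by
    simpa using tendsto_const_nhds.add hE
  have hsub : Tendsto (fun t => 1 - E t) l (𝓝 1) := by
    simpa using tendsto_const_nhds.sub hE
  simpa [cayleyTransform] using (hinv.tendsto.comp hadd).mul hsub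

theorem PosDef.tendsto_exp_neg_smul {R : Matrix n n ℝ} (hR : R.PosDef) :
    Tendsto (fun τ : ℝ => exp (-(τ • R))) atTop (𝓝 0) := by
  set U : Matrix n n ℝ := (hR.isHermitian.eigenvectorUnitary : Matrix n n ℝ)
  set μ := hR.isHermitian.eigenvalues
  have hU : star U = U⁻¹ :=
    (inv_eq_left_inv (Unitary.coe_star_mul_self hR.isHermitian.eigenvectorUnitary)).symm
  have hspec : R = U * diagonal μ * U⁻¹ := by
    rw [← hU]
    simpa [RCLike.ofReal_real_eq_id] using hR.isHermitian.spectral_theorem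
  have hexp (τ : ℝ) :
      exp (-(τ • R)) = U * diagonal (fun i => Real.exp (-(τ * μ i))) * U⁻¹ := by
    have hconj : -(τ • R) = U * diagonal (fun i => -(τ * μ i)) * U⁻¹ := by
      conv_lhs => rw [hspec]
      rw [← diagonal_neg, show (fun i => τ * μ i) = τ • μ from rfl, diagonal_smul]
      simp only [Matrix.mul_smul, Matrix.smul_mul, Matrix.mul_neg, Matrix.neg_mul]
    rw [hconj, exp_conj _ _ Unitary.isUnit_coe, exp_diagonal]
    congr 2
    funext i
    rw [Pi.exp_def, Real.exp_eq_exp_ℝ]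
  have hdiag : Tendsto (fun τ : ℝ => diagonal (fun i => Real.exp (-(τ * μ i)))) atTop (𝓝 0) := by
    rw [← diagonal_zero]
    refine (continuous_id.matrix_diagonal).tendsto _ |>.comp (tendsto_pi_nhds.2 fun i => ?_)
    exact Real.tendsto_exp_atBot.comp
      (tendsto_neg_atBot_iff.2 (tendsto_id.atTop_mul_const (hR.eigenvalues_pos i)))
  simpa [hexp] using (tendsto_const_nhds.mul hdiag).mul (tendsto_const_nhds (x := U⁻¹))

/-- When `1 + E` is singular, so is `R * mcosh X + W * msinh X`, and both sides are the junk
value `0`. -/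
theorem inv_mul_eq_cayleyTransform {d : ℕ} {R W : Matrix (Fin d) (Fin d) ℝ}
    (hRW : IsUnit (R + W)) (X : Matrix (Fin d) (Fin d) ℝ) :
    (R * mcosh X + W * msinh X)⁻¹ * (R * msinh X + W * mcosh X) =
      cayleyTransform (exp (-X) * ((R + W)⁻¹ * (R - W)) * exp (-X)) := by
  set E := exp (-X) * ((R + W)⁻¹ * (R - W)) * exp (-X)
  set U := (2:ℝ)⁻¹ • ((R + W) * exp X)
  have hU : IsUnit U := by
    rw [show U = algebraMap ℝ _ (2:ℝ)⁻¹ * ((R + W) * exp X) from Algebra.smul_def _ _]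
    exact ((IsUnit.mk0 _ (by norm_num)).map (algebraMap ℝ _)).mul (hRW.mul (isUnit_exp X))
  have hexp : exp X * exp (-X) = 1 := (invertibleExp X).mul_invOf_self
  have hUE : (R + W) * exp X * E = (R - W) * exp (-X) := by
    simp only [E, ← mul_assoc]
    rw [mul_assoc _ (exp X), hexp, mul_one,
      mul_nonsing_inv _ ((isUnit_iff_isUnit_det _).1 hRW), one_mul]
  have hM : R * mcosh X + W * msinh X = U * (1 + E) := by
    rw [mul_add, mul_one, smul_mul, hUE]
    simp only [U, mcosh, msinh, Matrix.mul_smul, ← smul_add]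
    congr 1
    noncomm_ring
  have hN : R * msinh X + W * mcosh X = U * (1 - E) := by
    rw [mul_sub, mul_one, smul_mul, hUE]
    simp only [U, mcosh, msinh, Matrix.mul_smul, ← smul_add, ← smul_sub]
    congr 1
    noncomm_ring
  rw [hM, hN, Matrix.mul_inv_rev, Matrix.mul_assoc,
    nonsing_inv_mul_cancel_left _ _ ((isUnit_iff_isUnit_det _).1 hU), cayleyTransform]

end Matrix

theorem stmt_9_general (d : ℕ)
    (R wbar : Matrix (Fin d) (Fin d) ℝ)
    (hRpos : R.PosDef)
    (hRw : IsUnit (R + wbar))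
    (k : ℝ → Matrix (Fin d) (Fin d) ℝ)
    (hk : ∀ τ, k τ = -((R * mcosh (τ • R) + wbar * msinh (τ • R))⁻¹ *
      (R * msinh (τ • R) + wbar * mcosh (τ • R)))) :
    Filter.Tendsto k Filter.atTop (nhds (-1)) := by
  set C := (R + wbar)⁻¹ * (R - wbar)
  have hdecay := hRpos.tendsto_exp_neg_smul
  have hE : Tendsto (fun τ : ℝ => exp (-(τ • R)) * C * exp (-(τ • R))) atTop (𝓝 0) := by
    simpa using (hdecay.mul_const C).mul hdecay
  have hk_eq : k = fun τ => -cayleyTransform (exp (-(τ • R)) * C * exp (-(τ • R))) := by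
    funext τ
    rw [hk, inv_mul_eq_cayleyTransform hRw]
  rw [hk_eq]
  simpa using (tendsto_cayleyTransform_of_tendsto_zero hE).neg

theorem stmt_9 (d : ℕ) (hd : 1 ≤ d)
    (R wbar : Matrix (Fin d) (Fin d) ℝ)
    (hRsymm : R.IsSymm) (hRpos : R.PosDef)
    (hRw : IsUnit (R + wbar))
    (hinv : ∀ τ : ℝ, 0 ≤ τ → IsUnit (R * mcosh (τ • R) + wbar * msinh (τ • R)))
    (k : ℝ → Matrix (Fin d) (Fin d) ℝ)
    (hk : ∀ τ, k τ = -((R * mcosh (τ • R) + wbar * msinh (τ • R))⁻¹ *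
      (R * msinh (τ • R) + wbar * mcosh (τ • R)))) :
    Filter.Tendsto k Filter.atTop (nhds (-1)) :=
  stmt_9_general d R wbar hRpos hRw k hk
end

section
/- Let d ≥ 1, let Q be an invertible real d×d matrix, let M satisfy the commutation condition Mᵀ(QᵀQ)⁻¹ = (QᵀQ)⁻¹M, and let v, w be symmetric real d×d matrices. Let R be a symmetric positive definite matrix with R·R = v̄, assume R + w̄ is invertible, and assume R·cosh(Rτ) + w̄·sinh(Rτ) is invertible for every τ ≥ 0. Then the function ψ(τ) := (QᵀQ)⁻¹M/2 − Q⁻¹·R·k(τ)·(Qᵀ)⁻¹/2 converges, as τ → ∞, to Q⁻¹·R·(Qᵀ)⁻¹/2 + (QᵀQ)⁻¹M/2. -/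
open Matrix NormedSpace

attribute [local instance] Matrix.linftyOpNormedRing Matrix.linftyOpNormedAlgebra

/-! With `E = exp (τ R)` and `F = exp (-τ R) = E⁻¹`, both hyperbolic combinations share the left
factor `X = ½ (R + w̄) E`: writing `G = F (R + w̄)⁻¹ (R - w̄) F`,
`R cosh + w̄ sinh = X (1 + G)` and `R sinh + w̄ cosh = X (1 - G)`, so `k τ = -(1 + G)⁻¹ (1 - G)`.
Diagonalising the positive definite `R` shows `F → 0`, hence `G → 0` and `k → -1`. -/

open Filter Topology

namespace Matrix

variable {n : Type*} [Fintype n] [DecidableEq n]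

theorem IsHermitian.exp_smul_eq {A : Matrix n n ℝ} (hA : A.IsHermitian) (t : ℝ) :
    NormedSpace.exp (t • A) = (hA.eigenvectorUnitary : Matrix n n ℝ) *
      diagonal (fun i ↦ Real.exp (t * hA.eigenvalues i)) *
        star (hA.eigenvectorUnitary : Matrix n n ℝ) := by
  set U := Unitary.toUnits hA.eigenvectorUnitary
  have hA' : t • A = U * diagonal (t • hA.eigenvalues) * U⁻¹ := by
    conv_lhs => rw [hA.spectral_theorem]
    simp [U, diagonal_smul]
  rw [hA', exp_units_conj, exp_diagonal]
  simp [U, Pi.exp_def, Real.exp_eq_exp_ℝ]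

theorem PosDef.tendsto_exp_neg_smul_atTop {A : Matrix n n ℝ} (hA : A.PosDef) :
    Tendsto (fun t : ℝ ↦ NormedSpace.exp (-(t • A))) atTop (𝓝 0) := by
  have hdecay : Tendsto (fun t : ℝ ↦ fun i ↦ Real.exp (-t * hA.isHermitian.eigenvalues i))
      atTop (𝓝 0) :=
    tendsto_pi_nhds.2 fun i ↦ Real.tendsto_exp_atBot.comp <|
      tendsto_neg_atTop_atBot.atBot_mul_const (hA.eigenvalues_pos i)
  have hconj : Continuous fun D : n → ℝ ↦ (hA.isHermitian.eigenvectorUnitary : Matrix n n ℝ) *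
      diagonal D * star (hA.isHermitian.eigenvectorUnitary : Matrix n n ℝ) := by
    fun_prop
  simpa [Function.comp_def, ← neg_smul, hA.isHermitian.exp_smul_eq] using
    (hconj.tendsto 0).comp hdecay

theorem tendsto_inv_one_add_mul_one_sub {α : Type*} {l : Filter α} {G : α → Matrix n n ℝ}
    (hG : Tendsto G l (𝓝 0)) : Tendsto (fun x ↦ (1 + G x)⁻¹ * (1 - G x)) l (𝓝 1) := by
  have hinv_cont : ContinuousAt Inv.inv (1 : Matrix n n ℝ) :=
    continuousAt_matrix_inv _ (by simp [Ring.inverse_eq_inv'])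
  simpa using
    (hinv_cont.tendsto.comp (by simpa using hG.const_add 1)).mul (by simpa using hG.const_sub 1)

end Matrix

theorem mcosh_msinh_quotient_eq {d : ℕ} {R W : Matrix (Fin d) (Fin d) ℝ} (hRW : IsUnit (R + W))
    (t : ℝ) :
    (R * mcosh (t • R) + W * msinh (t • R))⁻¹ * (R * msinh (t • R) + W * mcosh (t • R)) =
      (1 + exp (-(t • R)) * ((R + W)⁻¹ * (R - W)) * exp (-(t • R)))⁻¹ *
        (1 - exp (-(t • R)) * ((R + W)⁻¹ * (R - W)) * exp (-(t • R))) := by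
  set E := exp (t • R)
  set F := exp (-(t • R))
  set K := (R + W)⁻¹ * (R - W)
  have hEF : E * F = 1 := by
    rw [← Matrix.exp_add_of_commute _ _ (Commute.neg_right (Commute.refl (t • R))), add_neg_cancel,
      exp_zero]
  have hK : (R + W) * K = R - W :=
    mul_nonsing_inv_cancel_left _ _ ((isUnit_iff_isUnit_det _).1 hRW)
  have hG : (R + W) * E * (F * K * F) = (R - W) * F := by
    rw [mul_assoc, ← mul_assoc E, ← mul_assoc E, hEF, one_mul, ← mul_assoc, hK]
  set X := (2 : ℝ)⁻¹ • ((R + W) * E)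
  have hC : R * mcosh (t • R) + W * msinh (t • R) = X * (1 + F * K * F) := by
    rw [smul_mul, mul_add, mul_one, hG]
    simp only [mcosh, msinh, Matrix.mul_smul, ← smul_add]
    congr 1
    noncomm_ring
  have hS : R * msinh (t • R) + W * mcosh (t • R) = X * (1 - F * K * F) := by
    rw [smul_mul, mul_sub, mul_one, hG]
    simp only [mcosh, msinh, Matrix.mul_smul, ← smul_add]
    congr 1
    noncomm_ring
  have hX : IsUnit X.det := by
    rw [det_smul]
    exact (Ne.isUnit (by positivity)).mul
      ((isUnit_iff_isUnit_det _).1 (hRW.mul (Matrix.isUnit_exp _)))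
  -- `Matrix.mul_inv_rev` holds unconditionally, so `X` cancels even if `1 + F * K * F` is singular.
  rw [hC, hS, Matrix.mul_inv_rev, mul_assoc, nonsing_inv_mul_cancel_left _ _ hX]

theorem stmt_10_general (d : ℕ)
    (Q M R : Matrix (Fin d) (Fin d) ℝ)
    (hRpos : R.PosDef)
    (wbar : Matrix (Fin d) (Fin d) ℝ)
    (hRw : IsUnit (R + wbar))
    (k ψ : ℝ → Matrix (Fin d) (Fin d) ℝ)
    (hk : ∀ τ, k τ = -((R * mcosh (τ • R) + wbar * msinh (τ • R))⁻¹ *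
      (R * msinh (τ • R) + wbar * mcosh (τ • R))))
    (hψ : ∀ τ, ψ τ = (2:ℝ)⁻¹ • ((Qᵀ * Q)⁻¹ * M) - (2:ℝ)⁻¹ • (Q⁻¹ * R * k τ * Qᵀ⁻¹)) :
    Filter.Tendsto ψ Filter.atTop
      (nhds ((2:ℝ)⁻¹ • (Q⁻¹ * R * Qᵀ⁻¹) + (2:ℝ)⁻¹ • ((Qᵀ * Q)⁻¹ * M))) := by
  have hdecay := hRpos.tendsto_exp_neg_smul_atTop
  have hk_lim : Tendsto k atTop (𝓝 (-1)) := by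
    simp_rw [funext hk, mcosh_msinh_quotient_eq hRw]
    exact (tendsto_inv_one_add_mul_one_sub <| by
      simpa using (hdecay.mul_const ((R + wbar)⁻¹ * (R - wbar))).mul hdecay).neg
  have hψ_lim := (((hk_lim.const_mul (Q⁻¹ * R)).mul_const Qᵀ⁻¹).const_smul (2 : ℝ)⁻¹).const_sub
    ((2 : ℝ)⁻¹ • ((Qᵀ * Q)⁻¹ * M))
  rw [funext hψ]
  convert hψ_lim using 2
  rw [mul_neg_one, neg_mul, smul_neg, sub_neg_eq_add, add_comm]

theorem stmt_10 (d : ℕ) (hd : 1 ≤ d)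
    (Q M v w R : Matrix (Fin d) (Fin d) ℝ)
    (hQ : IsUnit Q)
    (hM : Mᵀ * (Qᵀ * Q)⁻¹ = (Qᵀ * Q)⁻¹ * M)
    (hv : v.IsSymm) (hw : w.IsSymm)
    (hRsymm : R.IsSymm) (hRpos : R.PosDef)
    (vbar wbar : Matrix (Fin d) (Fin d) ℝ)
    (hvbar : vbar = Q * ((2:ℝ) • v + Mᵀ * (Qᵀ * Q)⁻¹ * M) * Qᵀ)
    (hwbar : wbar = Q * ((2:ℝ) • w - (Qᵀ * Q)⁻¹ * M) * Qᵀ)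
    (hRR : R * R = vbar)
    (hRw : IsUnit (R + wbar))
    (hinv : ∀ τ : ℝ, 0 ≤ τ → IsUnit (R * mcosh (τ • R) + wbar * msinh (τ • R)))
    (k ψ : ℝ → Matrix (Fin d) (Fin d) ℝ)
    (hk : ∀ τ, k τ = -((R * mcosh (τ • R) + wbar * msinh (τ • R))⁻¹ *
      (R * msinh (τ • R) + wbar * mcosh (τ • R))))
    (hψ : ∀ τ, ψ τ = (2:ℝ)⁻¹ • ((Qᵀ * Q)⁻¹ * M) - (2:ℝ)⁻¹ • (Q⁻¹ * R * k τ * Qᵀ⁻¹)) :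
    Filter.Tendsto ψ Filter.atTop
      (nhds ((2:ℝ)⁻¹ • (Q⁻¹ * R * Qᵀ⁻¹) + (2:ℝ)⁻¹ • ((Qᵀ * Q)⁻¹ * M))) :=
  stmt_10_general d Q M R hRpos wbar hRw k ψ hk hψ
end

section
/- Let d ≥ 1, let Q be an invertible real d×d matrix, let M satisfy the commutation condition Mᵀ(QᵀQ)⁻¹ = (QᵀQ)⁻¹M, let v be a symmetric real d×d matrix, and let R be any real d×d matrix with R·R = v̄ where v̄ := Q(2v + Mᵀ(QᵀQ)⁻¹M)Qᵀ. Then the matrix ψ∞ := Q⁻¹·R·(Qᵀ)⁻¹/2 + (QᵀQ)⁻¹M/2 is a solution of the algebraic Riccati equation, i.e., ψ∞M + Mᵀψ∞ − 2ψ∞QᵀQψ∞ + v = 0. -/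
open Matrix

theorem stmt_11 (d : ℕ) (hd : 1 ≤ d)
    (Q M v R : Matrix (Fin d) (Fin d) ℝ)
    (hQ : IsUnit Q)
    (hM : Mᵀ * (Qᵀ * Q)⁻¹ = (Qᵀ * Q)⁻¹ * M)
    (hv : v.IsSymm)
    (hRR : R * R = Q * ((2:ℝ) • v + Mᵀ * (Qᵀ * Q)⁻¹ * M) * Qᵀ)
    (ψinf : Matrix (Fin d) (Fin d) ℝ)
    (hψinf : ψinf = (2:ℝ)⁻¹ • (Q⁻¹ * R * Qᵀ⁻¹) + (2:ℝ)⁻¹ • ((Qᵀ * Q)⁻¹ * M)) :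
    ψinf * M + Mᵀ * ψinf - (2:ℝ) • (ψinf * (Qᵀ * Q) * ψinf) + v = 0 := by
  have hdQ : IsUnit Q.det := (Matrix.isUnit_iff_isUnit_det Q).mp hQ
  have hdQT : IsUnit Qᵀ.det := by simpa [Matrix.det_transpose] using hdQ
  have h1 : Q⁻¹ * Q = 1 := Matrix.nonsing_inv_mul Q hdQ
  have h2 : Q * Q⁻¹ = 1 := Matrix.mul_nonsing_inv Q hdQ
  have h3 : Qᵀ⁻¹ * Qᵀ = 1 := Matrix.nonsing_inv_mul Qᵀ hdQT
  have h4 : Qᵀ * Qᵀ⁻¹ = 1 := Matrix.mul_nonsing_inv Qᵀ hdQT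
  have hc1 : ∀ X : Matrix (Fin d) (Fin d) ℝ, Q⁻¹ * (Q * X) = X := fun X => by
    rw [← Matrix.mul_assoc, h1, Matrix.one_mul]
  have hc2 : ∀ X : Matrix (Fin d) (Fin d) ℝ, Q * (Q⁻¹ * X) = X := fun X => by
    rw [← Matrix.mul_assoc, h2, Matrix.one_mul]
  have hc3 : ∀ X : Matrix (Fin d) (Fin d) ℝ, Qᵀ⁻¹ * (Qᵀ * X) = X := fun X => by
    rw [← Matrix.mul_assoc, h3, Matrix.one_mul]
  have hc4 : ∀ X : Matrix (Fin d) (Fin d) ℝ, Qᵀ * (Qᵀ⁻¹ * X) = X := fun X => by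
    rw [← Matrix.mul_assoc, h4, Matrix.one_mul]
  set S := Q⁻¹ * R * Qᵀ⁻¹ with hS
  set A := (Qᵀ * Q)⁻¹ with hAdef
  set N := A * M with hN
  have hA : A = Q⁻¹ * Qᵀ⁻¹ := Matrix.mul_inv_rev _ _
  have hMA : Mᵀ * A = N := hM
  have hAQTQ : A * (Qᵀ * Q) = 1 := by
    rw [hA]
    simp only [Matrix.mul_assoc, hc3]
    rw [h1]
  have k1 : S * (Qᵀ * Q) * S = (2:ℝ) • v + Mᵀ * A * M := by
    rw [hS]
    simp only [Matrix.mul_assoc, hc3, hc2]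
    rw [show R * (R * Qᵀ⁻¹) = R * R * Qᵀ⁻¹ from (Matrix.mul_assoc _ _ _).symm, hRR]
    simp only [Matrix.mul_assoc, hc1]
    simp [h4, Matrix.mul_assoc]
  have k2 : S * (Qᵀ * Q) * N = S * M := by
    rw [hN, hA]
    simp only [Matrix.mul_assoc, hc2, hc4]
  have hNQ : N * (Qᵀ * Q) = Mᵀ := by
    rw [← hMA, Matrix.mul_assoc, hAQTQ, Matrix.mul_one]
  have k3 : N * (Qᵀ * Q) * S = Mᵀ * S := by rw [hNQ]
  have k4 : N * (Qᵀ * Q) * N = Mᵀ * A * M := by rw [hNQ, hN, ← Matrix.mul_assoc]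
  have kNM : N * M = Mᵀ * A * M := by conv_lhs => rw [← hMA]
  have kMN : Mᵀ * N = Mᵀ * A * M := by rw [hN, ← Matrix.mul_assoc]
  have expand :
      ((2:ℝ)⁻¹ • S + (2:ℝ)⁻¹ • N) * (Qᵀ * Q) * ((2:ℝ)⁻¹ • S + (2:ℝ)⁻¹ • N)
        = (4:ℝ)⁻¹ • (S * (Qᵀ * Q) * S) + (4:ℝ)⁻¹ • (S * (Qᵀ * Q) * N)
          + (4:ℝ)⁻¹ • (N * (Qᵀ * Q) * S) + (4:ℝ)⁻¹ • (N * (Qᵀ * Q) * N) := by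
    simp only [Matrix.add_mul, Matrix.mul_add, Matrix.smul_mul, Matrix.mul_smul, smul_smul]
    module
  rw [hψinf, Matrix.add_mul, Matrix.mul_add, expand, k1, k2, k3, k4]
  simp only [Matrix.smul_mul, Matrix.mul_smul]
  rw [kNM, kMN]
  module
end

section
/- Let d ≥ 1, let u be a symmetric real d×d matrix, let t ≥ 0, and suppose that I_d + 2su is invertible for every s ∈ [0,t]. Then exp(2·∫₀ᵗ (I_d + 2su)⁻¹·u ds) = I_d + 2tu, i.e., the matrix (1/2)·log(I_d + 2tu) exists and is given by ∫₀ᵗ (I_d + 2su)⁻¹·u ds. -/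
/-!
Put `P s = 1 + s • a` and `F x = ∫₀ˣ P(s)⁻¹ a ds`. All `P s` commute with each other and
with `a`, so all values of `F` commute, and `exp (-F)` can be differentiated as in the
commutative case: `(exp (-F) * P)' = exp (-F) * (-P⁻¹ a P + a) = 0` on `[0, t]`.
Hence `exp (-F t) * P t = 1`, that is `exp (F t) = P t`. The matrix statement is the case
`a = 2 u`.
-/

open Matrix NormedSpace

attribute [local instance] Matrix.linftyOpNormedRing Matrix.linftyOpNormedAlgebra

open Set
open scoped Ring

theorem Commute.ringInverse_left {M₀ : Type*} [MonoidWithZero M₀] {a b : M₀}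
    (h : Commute a b) : Commute a⁻¹ʳ b := by
  by_cases ha : IsUnit a
  · obtain ⟨u, rfl⟩ := ha
    rw [Ring.inverse_unit]
    exact h.units_inv_left
  · rw [Ring.inverse_non_unit _ ha]
    exact .zero_left b

theorem commute_inverse_one_add_smul_mul {R A : Type*} [CommSemiring R] [Semiring A]
    [Algebra R A] (a : A) (r s : R) :
    Commute ((1 + r • a)⁻¹ʳ * a) ((1 + s • a)⁻¹ʳ * a) := by
  have hPa : ∀ r : R, Commute (1 + r • a) a := fun r =>
    (Commute.one_left a).add_left ((Commute.refl a).smul_left r)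
  have hPP : Commute (1 + r • a) (1 + s • a) :=
    (Commute.one_right _).add_right ((hPa r).smul_right s)
  exact (hPP.ringInverse_ringInverse.mul_right (hPa r).ringInverse_left).mul_left
    ((hPa s).ringInverse_left.symm.mul_right (.refl a))

theorem ContinuousOn.integral_hasDerivWithinAt_Icc {E : Type*} [NormedAddCommGroup E]
    [NormedSpace ℝ E] [CompleteSpace E] {f : ℝ → E} {a b x : ℝ}
    (hf : ContinuousOn f (Icc a b)) (hx : x ∈ Icc a b) :
    HasDerivWithinAt (fun y => ∫ s in a..y, f s) (f x) (Icc a b) x := by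
  have : Fact (x ∈ Icc a b) := ⟨hx⟩
  have hsub : uIcc a x ⊆ Icc a b := by
    rw [uIcc_of_le hx.1]
    exact Icc_subset_Icc_right hx.2
  exact intervalIntegral.integral_hasDerivWithinAt_right (hf.mono hsub).intervalIntegrable
    (hf.stronglyMeasurableAtFilter_nhdsWithin measurableSet_Icc x) (hf x hx)

section BanachAlgebra

variable {𝔸 : Type*} [NormedRing 𝔸] [NormedAlgebra ℝ 𝔸] [CompleteSpace 𝔸]

theorem Commute.intervalIntegral_left {f : ℝ → 𝔸} {a b : ℝ} {x : 𝔸}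
    (h : ∀ s, Commute (f s) x) : Commute (∫ s in a..b, f s) x := by
  by_cases hf : IntervalIntegrable f MeasureTheory.volume a b
  · let L : 𝔸 →L[ℝ] 𝔸 :=
      (ContinuousLinearMap.mul ℝ 𝔸).flip x - ContinuousLinearMap.mul ℝ 𝔸 x
    have hL : L (∫ s in a..b, f s) = 0 := by
      simp [← L.intervalIntegral_comp_comm hf, L, (h _).eq]
    show _ * x = x * _
    simpa [L, sub_eq_zero] using hL
  · simp [intervalIntegral.integral_undef hf]

theorem hasDerivWithinAt_exp_of_commute {F : ℝ → 𝔸} {F' : 𝔸} {s : Set ℝ} {x : ℝ}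
    (hF : HasDerivWithinAt F F' s x) (hcomm : ∀ y, Commute (F x) (F y)) :
    HasDerivWithinAt (fun y => exp (F y)) (exp (F x) * F') s x := by
  let : NormedAlgebra ℚ 𝔸 := .restrictScalars ℚ ℝ 𝔸
  have hexp : HasFDerivAt exp (1 : 𝔸 →L[ℝ] 𝔸) (F x - F x) := by
    rw [sub_self]
    exact hasFDerivAt_exp_zero
  have hshift := (hexp.comp_hasDerivWithinAt x (hF.sub_const (F x))).const_mul (exp (F x))
  rw [one_apply_eq_self] at hshift
  convert hshift using 2 with y
  rw [Function.comp_apply, ← NormedSpace.exp_add_of_commute ((hcomm y).sub_right (.refl _)),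
    add_sub_cancel]

theorem continuousOn_inverse_one_add_smul_mul {a : 𝔸} {S : Set ℝ}
    (hunit : ∀ s ∈ S, IsUnit (1 + s • a)) :
    ContinuousOn (fun s : ℝ => (1 + s • a)⁻¹ʳ * a) S := fun s hs => by
  obtain ⟨u, hu⟩ := hunit s hs
  have hinv : ContinuousAt Ring.inverse (1 + s • a) := hu ▸ NormedRing.inverse_continuousAt u
  have hpath : ContinuousAt (fun r : ℝ => 1 + r • a) s := by fun_prop
  exact ((hinv.comp_of_eq hpath rfl).mul continuousAt_const).continuousWithinAt

theorem exp_intervalIntegral_inverse_one_add_smul_mul {a : 𝔸} {t : ℝ} (ht : 0 ≤ t)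
    (hunit : ∀ s ∈ Icc 0 t, IsUnit (1 + s • a)) :
    exp (∫ s in (0 : ℝ)..t, (1 + s • a)⁻¹ʳ * a) = 1 + t • a := by
  set P : ℝ → 𝔸 := fun s => 1 + s • a
  set B : ℝ → 𝔸 := fun s => (P s)⁻¹ʳ * a
  set F : ℝ → 𝔸 := fun x => ∫ s in (0 : ℝ)..x, B s
  have hFF : ∀ x y, Commute (F x) (F y) := fun x y =>
    Commute.intervalIntegral_left fun r => (Commute.intervalIntegral_left fun s =>
      commute_inverse_one_add_smul_mul a s r).symm
  have hBP : ∀ x ∈ Icc 0 t, B x * P x = a := fun x hx => by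
    have hPa : P x * a = a * P x := (Commute.one_left a).add_left ((Commute.refl a).smul_left x)
    rw [mul_assoc, ← hPa, ← mul_assoc, Ring.inverse_mul_cancel _ (hunit x hx), one_mul]
  have hB_cont : ContinuousOn B (Icc 0 t) := continuousOn_inverse_one_add_smul_mul hunit
  have hΦ : ∀ x ∈ Icc 0 t, HasDerivWithinAt (fun y => exp (-F y) * P y) 0 (Icc 0 t) x := by
    intro x hx
    have hexp := hasDerivWithinAt_exp_of_commute (hB_cont.integral_hasDerivWithinAt_Icc hx).neg
      fun y => (hFF x y).neg_left.neg_right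
    have hP : HasDerivWithinAt P a (Icc 0 t) x := by
      have hP := ((hasDerivAt_id x).smul_const a).const_add (1 : 𝔸)
      rw [one_smul] at hP
      exact hP.hasDerivWithinAt
    refine (hexp.mul hP).congr_deriv ?_
    rw [mul_assoc, neg_mul, hBP x hx, mul_neg, neg_add_cancel]
  have hΦ_const : exp (-F t) * P t = exp (-F 0) * P 0 := by
    simpa [sub_eq_zero] using
      norm_image_sub_le_of_norm_deriv_le_segment' hΦ (fun _ _ => norm_zero.le) t ⟨ht, le_rfl⟩
  let : NormedAlgebra ℚ 𝔸 := .restrictScalars ℚ ℝ 𝔸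
  calc exp (F t) = exp (F t) * (exp (-F t) * P t) := by simp [hΦ_const, F, P]
    _ = P t := by
      rw [← mul_assoc, ← NormedSpace.exp_add_of_commute (Commute.refl _).neg_right,
        add_neg_cancel, exp_zero, one_mul]

end BanachAlgebra

theorem stmt_13_general (d : ℕ)
    (u : Matrix (Fin d) (Fin d) ℝ)
    (t : ℝ) (ht : 0 ≤ t)
    (hinv : ∀ s ∈ Set.Icc (0:ℝ) t, IsUnit ((1 : Matrix (Fin d) (Fin d) ℝ) + (2 * s) • u)) :
    exp ((2:ℝ) • ∫ s in (0:ℝ)..t, ((1 : Matrix (Fin d) (Fin d) ℝ) + (2 * s) • u)⁻¹ * u)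
      = 1 + (2 * t) • u := by
  have hpath : ∀ s : ℝ, (2 * s) • u = s • (2 : ℝ) • u := fun s => by rw [smul_smul, mul_comm]
  simp only [hpath] at hinv ⊢
  rw [← intervalIntegral.integral_smul]
  simp only [nonsing_inv_eq_ringInverse, ← mul_smul_comm]
  exact exp_intervalIntegral_inverse_one_add_smul_mul ht hinv

theorem stmt_13 (d : ℕ) (hd : 1 ≤ d)
    (u : Matrix (Fin d) (Fin d) ℝ) (hu : u.IsSymm)
    (t : ℝ) (ht : 0 ≤ t)
    (hinv : ∀ s ∈ Set.Icc (0:ℝ) t, IsUnit ((1 : Matrix (Fin d) (Fin d) ℝ) + (2 * s) • u)) :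
    exp ((2:ℝ) • ∫ s in (0:ℝ)..t, ((1 : Matrix (Fin d) (Fin d) ℝ) + (2 * s) • u)⁻¹ * u)
      = 1 + (2 * t) • u :=
  stmt_13_general d u t ht hinv
end
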